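/- Let φ: 𝔾_m → ℙⁿ_ℂ be a non-constant morphism whose image avoids hyperplanes H₁, …, H_r and is not contained in any hyperplane. Suppose linear forms L_{i₁}, …, L_{i_m} defining some of the Hᵢ are linearly dependent with m minimal. Then the functions φ_j = (L_{i_j}/L_{i_m}) ∘ φ, j = 1, …, m, are nowhere-vanishing regular functions on 𝔾_m, hence of the form c_j t^{n_j} with c_j ∈ ℂ*, and minimality forces the exponents n_j to be pairwise distinct, contradicting the linear dependence. Conclude: if the complement of hyperplanes H₁, …, H_r in ℙⁿ admits a non-constant map from 𝔾_m, then some line in ℙⁿ meets H₁ ∪ ⋯ ∪ H_r in at most two points. -/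

import Mathlib

/-!
Composed with the curve `t ↦ laurentEval Φ t`, each form `L j` is a nowhere-vanishing Laurent
polynomial, hence a monomial `a t ^ N` (clear the denominator and use that `ℂ` is algebraically
closed). Comparing coefficients, `L j` kills every coefficient vector `Φ m` with `m ≠ N`. Take a
nonzero coefficient vector `Φ M` and a point `laurentEval Φ t` independent of it, and let `W` be
their span. On `W`, a form with `N ≠ M` vanishes only along `Φ M`, and a form with `N = M` only
along `laurentEval Φ t - t ^ M • Φ M`, so the line `ℙ(W)` meets the hyperplanes in at most these
two points.
-/

open Polynomial in
theorem Polynomial.exists_eq_C_mul_X_pow_of_eval_ne_zero {K : Type*} [Field K] [IsAlgClosed K]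
    (P : K[X]) (hP : ∀ z ≠ 0, P.eval z ≠ 0) : ∃ (a : K) (d : ℕ), P = C a * X ^ d := by
  rcases eq_or_ne P 0 with rfl | hP0
  · exact ⟨0, 0, by simp⟩
  obtain ⟨Q, hPQ, hQ⟩ := P.exists_eq_pow_rootMultiplicity_mul_and_not_dvd hP0 0
  set d := P.rootMultiplicity 0
  have hQroot : ∀ z, ¬ Q.IsRoot z := by
    intro z hz
    rcases eq_or_ne z 0 with rfl | hz0
    · exact hQ (dvd_iff_isRoot.2 hz)
    · exact hP z hz0 (by rw [hPQ, eval_mul, hz.eq_zero, mul_zero])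
  have hQdeg : Q.degree = 0 := by
    by_contra h
    obtain ⟨z, hz⟩ := IsAlgClosed.exists_root Q h
    exact hQroot z hz
  refine ⟨Q.coeff 0, d, ?_⟩
  rw [hPQ, map_zero, sub_zero, mul_comm, ← eq_C_of_degree_eq_zero hQdeg]

open LaurentPolynomial in
theorem LaurentPolynomial.exists_eq_C_mul_T_of_eval₂_ne_zero {K : Type*} [Field K] [IsAlgClosed K]
    (f : K[T;T⁻¹]) (hf : ∀ t : Kˣ, eval₂ (RingHom.id K) t f ≠ 0) :
    ∃ (a : K) (N : ℤ), f = C a * T N := by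
  obtain ⟨k, P, hP⟩ := f.exists_T_pow
  have hPeval : ∀ z ≠ 0, P.eval z ≠ 0 := by
    intro z hz
    have := congrArg (eval₂ (RingHom.id K) (Units.mk0 z hz)) hP
    rw [eval₂_toLaurent, Polynomial.eval₂_id, map_mul, eval₂_T, Units.val_mk0] at this
    rw [this]
    exact mul_ne_zero (hf _) (Units.ne_zero _)
  obtain ⟨a, d, rfl⟩ := P.exists_eq_C_mul_X_pow_of_eval_ne_zero hPeval
  refine ⟨a, d - k, ?_⟩
  rw [Polynomial.toLaurent_C_mul_X_pow] at hP
  rw [sub_eq_add_neg, ← mul_T_assoc, hP, mul_T_assoc, add_neg_cancel, T_zero, mul_one]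

section LaurentEval

variable {K E F : Type*} [Field K] [AddCommGroup E] [Module K E] [AddCommGroup F] [Module K F]

noncomputable def laurentEval (Φ : ℤ →₀ E) (t : Kˣ) : E :=
  Φ.sum fun m w => (t : K) ^ m • w

theorem laurentEval_single (N : ℤ) (w : E) (t : Kˣ) :
    laurentEval (Finsupp.single N w) t = (t : K) ^ N • w :=
  Finsupp.sum_single_index (smul_zero _)

theorem LinearMap.map_laurentEval (L : E →ₗ[K] F) (Φ : ℤ →₀ E) (t : Kˣ) :
    L (laurentEval Φ t) = laurentEval (Φ.mapRange L L.map_zero) t := by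
  rw [laurentEval, laurentEval, map_finsuppSum, Finsupp.sum_mapRange_index (fun _ => smul_zero _)]
  simp only [map_smul]

open LaurentPolynomial in
theorem laurentEval_eq_eval₂ (p : ℤ →₀ K) (t : Kˣ) :
    laurentEval p t = eval₂ (RingHom.id K) t (AddMonoidAlgebra.ofCoeff p) := by
  induction p using Finsupp.induction_linear with
  | zero => simp [laurentEval]
  | add p q hp hq =>
    rw [AddMonoidAlgebra.ofCoeff_add, map_add, ← hp, ← hq, laurentEval, laurentEval, laurentEval,
      Finsupp.sum_add_index' (fun _ => smul_zero _) (fun _ _ _ => smul_add _ _ _)]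
  | single N a =>
    rw [laurentEval_single, AddMonoidAlgebra.ofCoeff_single, single_eq_C_mul_T, eval₂_C_mul_T,
      Units.val_zpow_eq_zpow_val, smul_eq_mul, mul_comm, RingHom.id_apply]

theorem exists_eq_single_of_laurentEval_ne_zero [IsAlgClosed K] (p : ℤ →₀ K)
    (hp : ∀ t : Kˣ, laurentEval p t ≠ 0) : ∃ (N : ℤ) (a : K), a ≠ 0 ∧ p = Finsupp.single N a := by
  obtain ⟨a, N, hpa⟩ := LaurentPolynomial.exists_eq_C_mul_T_of_eval₂_ne_zero _
    fun t => laurentEval_eq_eval₂ p t ▸ hp t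
  rw [← LaurentPolynomial.single_eq_C_mul_T, ← AddMonoidAlgebra.ofCoeff_single,
    AddMonoidAlgebra.ofCoeff_inj] at hpa
  subst hpa
  refine ⟨N, a, fun ha => hp 1 ?_, rfl⟩
  rw [ha, Finsupp.single_zero, laurentEval, Finsupp.sum_zero_index]

theorem exists_laurentEval_eq_pi {ι : Type*} [Fintype ι] (c : ι → ℤ →₀ K) :
    ∃ Φ : ℤ →₀ (ι → K), ∀ t : Kˣ, laurentEval Φ t = fun i => laurentEval (c i) t := by
  classical
  refine ⟨Finsupp.onFinset (Finset.univ.biUnion fun i => (c i).support) (fun m i => c i m) ?_,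
    fun t => ?_⟩
  · intro m hm
    obtain ⟨i, hi⟩ := Function.ne_iff.1 hm
    exact Finset.mem_biUnion.2 ⟨i, Finset.mem_univ i, Finsupp.mem_support_iff.2 hi⟩
  · ext i
    rw [laurentEval, Finsupp.onFinset_sum _ (fun _ => smul_zero _), laurentEval,
      Finsupp.sum_of_support_subset _
        (Finset.subset_biUnion_of_mem (fun i => (c i).support) (Finset.mem_univ i)) _
        (fun _ _ => smul_zero _)]
    simp [Finset.sum_apply]

end LaurentEval

namespace Projectivization

variable {K V : Type*} [Field K] [AddCommGroup V] [Module K V]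

theorem mk_eq_mk_of_mem_inf_ker [FiniteDimensional K V] {W : Submodule K V}
    (hW : Module.finrank K W ≤ 2) {L : V →ₗ[K] K} (hWL : ¬ W ≤ LinearMap.ker L) {u v : V}
    (hu : u ≠ 0) (hv : v ≠ 0) (huW : u ∈ W ⊓ LinearMap.ker L) (hvW : v ∈ W ⊓ LinearMap.ker L) :
    mk K u hu = mk K v hv := by
  have hrank : Module.finrank K (W ⊓ LinearMap.ker L : Submodule K V) ≤ 1 := by
    have := Submodule.finrank_lt_finrank_of_lt (inf_lt_left.2 hWL)
    omega
  have key (w : V) (hw : w ≠ 0) (hwW : w ∈ W ⊓ LinearMap.ker L) :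
      (mk K w hw).submodule = W ⊓ LinearMap.ker L := by
    refine Submodule.eq_of_le_of_finrank_le ?_ ((mk K w hw).finrank_submodule ▸ hrank)
    rwa [submodule_mk, Submodule.span_singleton_le_iff_mem]
  exact submodule_injective ((key u hu huW).trans (key v hv hvW).symm)

end Projectivization

theorem LinearIndependent.pair_left_or_pair_right {K V : Type*} [Field K] [AddCommGroup V]
    [Module K V] {x y z : V} (hxy : LinearIndependent K ![x, y]) (hz : z ≠ 0) :
    LinearIndependent K ![z, x] ∨ LinearIndependent K ![z, y] := by
  by_contra! h
  simp only [LinearIndependent.pair_iff' hz, not_forall, not_not] at h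
  obtain ⟨⟨a, rfl⟩, ⟨b, rfl⟩⟩ := h
  obtain ⟨rfl, ha⟩ := LinearIndependent.pair_iff.1 hxy b (-a)
    (by rw [smul_smul, smul_smul, neg_mul, mul_comm, neg_smul, add_neg_cancel])
  rw [neg_eq_zero] at ha
  subst ha
  exact hxy.ne_zero 0 (by simp)

open Projectivization LinearAlgebra.Projectivization in
theorem exists_finrank_eq_two_of_mapRange_eq_single {K E ι : Type*} [Field K] [AddCommGroup E]
    [Module K E] [FiniteDimensional K E] {Φ : ℤ →₀ E} {L : ι → E →ₗ[K] K}
    (hL : ∀ j, ∃ (N : ℤ) (a : K), a ≠ 0 ∧ Φ.mapRange (L j) (L j).map_zero = .single N a)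
    {M : ℤ} {t : Kˣ} (ht : LinearIndependent K ![Φ M, laurentEval Φ t]) :
    ∃ W : Submodule K E, Module.finrank K W = 2 ∧
      ∃ p q : ℙ K E, ∀ x : ℙ K E, x.submodule ≤ W → (∃ j, L j x.rep = 0) → x = p ∨ x = q := by
  set W := Submodule.span K (Set.range ![Φ M, laurentEval Φ t])
  have hW : Module.finrank K W = 2 := by simp [W, finrank_span_eq_card ht]
  have hMW : Φ M ∈ W := Submodule.subset_span ⟨0, rfl⟩
  have htW : laurentEval Φ t ∈ W := Submodule.subset_span ⟨1, rfl⟩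
  have hq : laurentEval Φ t - (t : K) ^ M • Φ M ≠ 0 := by
    intro h
    have := LinearIndependent.pair_iff.1 ht (-(t : K) ^ M) 1 (by rw [← h]; module)
    exact one_ne_zero this.2
  refine ⟨W, hW, mk K (Φ M) (ht.ne_zero 0), mk K _ hq, ?_⟩
  rintro x hxW ⟨j, hj⟩
  have hxW' : x.rep ∈ W := hxW (x.submodule_eq ▸ Submodule.mem_span_singleton_self _)
  obtain ⟨N, a, ha, hLΦ⟩ := hL j
  have hLm (m : ℤ) : L j (Φ m) = Finsupp.single N a m := by rw [← hLΦ, Finsupp.mapRange_apply]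
  have hLt : L j (laurentEval Φ t) = (t : K) ^ N * a := by
    rw [LinearMap.map_laurentEval, hLΦ, laurentEval_single, smul_eq_mul]
  rw [← x.mk_rep]
  by_cases hNM : N = M
  · subst hNM
    refine .inr (mk_eq_mk_of_mem_inf_ker hW.le (fun h => ?_) _ _ ⟨hxW', hj⟩
      ⟨sub_mem htW (W.smul_mem _ hMW), ?_⟩)
    · exact ha (by simpa [hLm] using h hMW)
    · simp [hLt, hLm]
  · refine .inl (mk_eq_mk_of_mem_inf_ker hW.le (fun h => ?_) _ _ ⟨hxW', hj⟩ ⟨hMW, ?_⟩)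
    · exact mul_ne_zero (zpow_ne_zero _ t.ne_zero) ha (hLt ▸ LinearMap.mem_ker.1 (h htW))
    · simp [hLm, Ne.symm hNM]

theorem stmt_10_general (n r : ℕ) (L : Fin r → ((Fin (n + 1) → ℂ) →ₗ[ℂ] ℂ))
    (c : Fin (n + 1) → (ℤ →₀ ℂ))
    (f : Fin (n + 1) → ℂˣ → ℂ)
    (hf : ∀ i t, f i t = (c i).sum fun m a => a * (t : ℂ) ^ m)
    (hne : ∀ t : ℂˣ, (fun i => f i t) ≠ 0)
    (havoid : ∀ (t : ℂˣ) (j : Fin r), L j (fun i => f i t) ≠ 0)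
    (hnonconst : ∃ t t' : ℂˣ, ∀ a : ℂ, (fun i => f i t') ≠ a • fun i => f i t) :
    ∃ W : Submodule ℂ (Fin (n + 1) → ℂ), Module.finrank ℂ W = 2 ∧
      ∃ p q : Projectivization ℂ (Fin (n + 1) → ℂ),
        ∀ x : Projectivization ℂ (Fin (n + 1) → ℂ), x.submodule ≤ W →
          (∃ j : Fin r, L j x.rep = 0) → x = p ∨ x = q := by
  obtain ⟨Φ, hΦ⟩ := exists_laurentEval_eq_pi c
  have hfΦ (t : ℂˣ) : (fun i => f i t) = laurentEval Φ t := by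
    rw [hΦ t]
    ext i
    simp only [hf, laurentEval, smul_eq_mul, mul_comm]
  simp only [hfΦ] at hne havoid hnonconst
  obtain ⟨t₀, t₁, hcon⟩ := hnonconst
  obtain ⟨M, hM⟩ : ∃ M, Φ M ≠ 0 := by
    by_contra! h
    exact hne t₀ (by rw [DFunLike.ext Φ 0 h, laurentEval, Finsupp.sum_zero_index])
  have hpair : LinearIndependent ℂ ![laurentEval Φ t₀, laurentEval Φ t₁] :=
    (LinearIndependent.pair_iff' (hne t₀)).2 fun a h => hcon a h.symm
  obtain ⟨t, ht⟩ : ∃ t, LinearIndependent ℂ ![Φ M, laurentEval Φ t] :=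
    (hpair.pair_left_or_pair_right hM).elim (⟨t₀, ·⟩) (⟨t₁, ·⟩)
  exact exists_finrank_eq_two_of_mapRange_eq_single (fun j =>
    exists_eq_single_of_laurentEval_ne_zero _ fun t => (L j).map_laurentEval Φ t ▸ havoid t j) ht

theorem stmt_10 (n r : ℕ) (L : Fin r → ((Fin (n + 1) → ℂ) →ₗ[ℂ] ℂ)) (hL : ∀ j, L j ≠ 0)
    (c : Fin (n + 1) → (ℤ →₀ ℂ))
    (f : Fin (n + 1) → ℂˣ → ℂ)
    (hf : ∀ i t, f i t = (c i).sum fun m a => a * (t : ℂ) ^ m)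
    (hne : ∀ t : ℂˣ, (fun i => f i t) ≠ 0)
    (havoid : ∀ (t : ℂˣ) (j : Fin r), L j (fun i => f i t) ≠ 0)
    (hnonconst : ∃ t t' : ℂˣ, ∀ a : ℂ, (fun i => f i t') ≠ a • fun i => f i t) :
    ∃ W : Submodule ℂ (Fin (n + 1) → ℂ), Module.finrank ℂ W = 2 ∧
      ∃ p q : Projectivization ℂ (Fin (n + 1) → ℂ),
        ∀ x : Projectivization ℂ (Fin (n + 1) → ℂ), x.submodule ≤ W →
          (∃ j : Fin r, L j x.rep = 0) → x = p ∨ x = q :=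
  stmt_10_general n r L c f hf hne havoid hnonconst
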